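/- arXiv:math/0702137 — 5 statements merged into one kernel-verified Lean document; each statement's English description precedes it below -/
import Mathlib

section
/- For all integers k, l, m, n with 0 ≤ l ≤ k ≤ min(m, n), the following identity holds: Σ_{i = max(0, 2k−l−n)}^{min(k, m−l)} (−1)^i · (m−i)! (n−k+i)! / ( i! (k−i)! (m−l−i)! (n+l−2k+i)! ) = (−1)^{k+l}. -/
open Finset

/-- Alternating binomial sum. -/
def KMG (k a b m n : ℕ) : ℤ :=
  ∑ i ∈ range (k+1), (-1)^i * (k.choose i : ℤ) * ((m-i).choose a : ℤ) * ((n+i).choose b : ℤ)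

lemma KM_diff_step (k : ℕ) (f : ℕ → ℤ) :
    ∑ i ∈ range (k+2), (-1)^i * ((k+1).choose i : ℤ) * f i
      = ∑ i ∈ range (k+1), (-1)^i * (k.choose i : ℤ) * (f i - f (i+1)) := by
  have h1 : ∀ j : ℕ, ((k+1).choose (j+1) : ℤ) = k.choose j + k.choose (j+1) := by
    intro j; exact_mod_cast Nat.choose_succ_succ k j
  rw [Finset.sum_range_succ' _ (k+1)]
  have hL : ∑ i ∈ range (k+1), (-1:ℤ)^(i+1) * ((k+1).choose (i+1) : ℤ) * f (i+1)
      = ∑ i ∈ range (k+1), ((-1:ℤ)^(i+1) * (k.choose i : ℤ) * f (i+1)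
          + (-1)^(i+1) * (k.choose (i+1) : ℤ) * f (i+1)) := by
    refine Finset.sum_congr rfl fun i _ => ?_
    rw [h1]; ring
  rw [hL, Finset.sum_add_distrib]
  have hR : ∑ i ∈ range (k+1), (-1:ℤ)^i * (k.choose i : ℤ) * (f i - f (i+1))
      = ∑ i ∈ range (k+1), ((-1:ℤ)^i * (k.choose i : ℤ) * f i
          - (-1:ℤ)^i * (k.choose i : ℤ) * f (i+1)) := by
    refine Finset.sum_congr rfl fun i _ => ?_; ring
  rw [hR, Finset.sum_sub_distrib]
  have h2 : ∑ i ∈ range (k+1), (-1:ℤ)^i * (k.choose i : ℤ) * f i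
      = (-1:ℤ)^0 * (k.choose 0 : ℤ) * f 0
        + ∑ i ∈ range k, (-1:ℤ)^(i+1) * (k.choose (i+1) : ℤ) * f (i+1) := by
    rw [Finset.sum_range_succ' _ k]; ring
  have h3 : ∑ i ∈ range (k+1), (-1:ℤ)^(i+1) * (k.choose (i+1) : ℤ) * f (i+1)
      = ∑ i ∈ range k, (-1:ℤ)^(i+1) * (k.choose (i+1) : ℤ) * f (i+1) := by
    rw [Finset.sum_range_succ]
    simp [Nat.choose_succ_self]
  have h4 : ∀ i, (-1:ℤ)^(i+1) * (k.choose i : ℤ) * f (i+1)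
      = -((-1:ℤ)^i * (k.choose i : ℤ) * f (i+1)) := by intro i; ring
  simp only [h4]
  rw [Finset.sum_neg_distrib]
  rw [h2, h3]
  simp
  ring

lemma KM_step (k a b m n : ℕ) (h : k < m) :
    KMG (k+1) a b m n
      = ∑ i ∈ range (k+1), (-1)^i * (k.choose i : ℤ) *
          (((m-i).choose a : ℤ) * ((n+i).choose b : ℤ)
            - ((m-1-i).choose a : ℤ) * ((n+i+1).choose b : ℤ)) := by
  unfold KMG
  have := KM_diff_step k (fun i => ((m-i).choose a : ℤ) * ((n+i).choose b : ℤ))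
  rw [show k+1+1 = k+2 from rfl]
  rw [show (∑ i ∈ range (k+2), (-1:ℤ)^i * ((k+1).choose i : ℤ) * ((m-i).choose a : ℤ) * ((n+i).choose b : ℤ))
      = ∑ i ∈ range (k+2), (-1:ℤ)^i * ((k+1).choose i : ℤ) * (((m-i).choose a : ℤ) * ((n+i).choose b : ℤ)) from
    Finset.sum_congr rfl fun i _ => by ring]
  rw [this]
  refine Finset.sum_congr rfl fun i hi => ?_
  simp only [Finset.mem_range] at hi
  have h2 : m - (i+1) = m - 1 - i := by omega
  rw [h2]
  ring_nf

theorem KM_main : ∀ k a b m n : ℕ, k ≤ m → a + b ≤ k →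
    KMG k a b m n = if a + b = k then (-1)^(k+a) * (k.choose a : ℤ) else 0 := by
  intro k
  induction k with
  | zero =>
    intro a b m n _ hab
    have ha : a = 0 := by omega
    have hb : b = 0 := by omega
    subst ha; subst hb
    simp [KMG]
  | succ k ih =>
    intro a b m n hm hab
    rw [KM_step k a b m n (by omega)]
    match a, b with
    | 0, 0 =>
      have : ∀ i ∈ range (k+1), (-1:ℤ)^i * (k.choose i : ℤ) *
          (((m-i).choose 0 : ℤ) * ((n+i).choose 0 : ℤ)
            - ((m-1-i).choose 0 : ℤ) * ((n+i+1).choose 0 : ℤ)) = 0 := by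
        intro i _; simp
      rw [Finset.sum_congr rfl this]
      simp
    | 0, b+1 =>
      have hbr : ∀ i ∈ range (k+1), (-1:ℤ)^i * (k.choose i : ℤ) *
          (((m-i).choose 0 : ℤ) * ((n+i).choose (b+1) : ℤ)
            - ((m-1-i).choose 0 : ℤ) * ((n+i+1).choose (b+1) : ℤ))
          = -((-1:ℤ)^i * (k.choose i : ℤ) * (((m-1)-i).choose 0 : ℤ) * ((n+i).choose b : ℤ)) := by
        intro i hi
        have : (n+i+1).choose (b+1) = (n+i).choose b + (n+i).choose (b+1) := Nat.choose_succ_succ _ _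
        rw [this]
        push_cast
        simp only [Nat.choose_zero_right]
        push_cast
        ring
      rw [Finset.sum_congr rfl hbr, Finset.sum_neg_distrib]
      have := ih 0 b (m-1) n (by omega) (by omega)
      rw [show (∑ i ∈ range (k+1), (-1:ℤ)^i * (k.choose i : ℤ) * (((m-1)-i).choose 0 : ℤ) * ((n+i).choose b : ℤ)) = KMG k 0 b (m-1) n from rfl] at *
      rw [this]
      by_cases hc : b = k
      · subst hc; simp [pow_succ]
      · simp [hc, show ¬(0 + (b+1) = k + 1) from by omega]
    | a+1, 0 =>
      have hbr : ∀ i ∈ range (k+1), (-1:ℤ)^i * (k.choose i : ℤ) *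
          (((m-i).choose (a+1) : ℤ) * ((n+i).choose 0 : ℤ)
            - ((m-1-i).choose (a+1) : ℤ) * ((n+i+1).choose 0 : ℤ))
          = (-1:ℤ)^i * (k.choose i : ℤ) * (((m-1)-i).choose a : ℤ) * ((n+i).choose 0 : ℤ) := by
        intro i hi
        simp only [Finset.mem_range] at hi
        have hmi : m - i = (m - 1 - i) + 1 := by omega
        rw [hmi, Nat.choose_succ_succ]
        simp only [Nat.choose_zero_right, Nat.succ_eq_add_one]
        push_cast
        ring
      rw [Finset.sum_congr rfl hbr]
      rw [show (∑ i ∈ range (k+1), (-1:ℤ)^i * (k.choose i : ℤ) * (((m-1)-i).choose a : ℤ) * ((n+i).choose 0 : ℤ)) = KMG k a 0 (m-1) n from rfl]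
      rw [ih a 0 (m-1) n (by omega) (by omega)]
      by_cases hc : a = k
      · subst hc; simp [pow_succ, pow_add]
      · simp [hc, show ¬(a+1 + 0 = k + 1) from by omega]
    | a+1, b+1 =>
      have hbr : ∀ i ∈ range (k+1), (-1:ℤ)^i * (k.choose i : ℤ) *
          (((m-i).choose (a+1) : ℤ) * ((n+i).choose (b+1) : ℤ)
            - ((m-1-i).choose (a+1) : ℤ) * ((n+i+1).choose (b+1) : ℤ))
          = (-1:ℤ)^i * (k.choose i : ℤ) * (((m-1)-i).choose a : ℤ) * ((n+i).choose (b+1) : ℤ)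
            - (-1:ℤ)^i * (k.choose i : ℤ) * (((m-1)-i).choose (a+1) : ℤ) * ((n+i).choose b : ℤ) := by
        intro i hi
        simp only [Finset.mem_range] at hi
        have hmi : m - i = (m - 1 - i) + 1 := by omega
        rw [hmi, Nat.choose_succ_succ, Nat.choose_succ_succ (n+i)]
        push_cast
        ring
      rw [Finset.sum_congr rfl hbr, Finset.sum_sub_distrib]
      rw [show (∑ i ∈ range (k+1), (-1:ℤ)^i * (k.choose i : ℤ) * (((m-1)-i).choose a : ℤ) * ((n+i).choose (b+1) : ℤ)) = KMG k a (b+1) (m-1) n from rfl]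
      rw [show (∑ i ∈ range (k+1), (-1:ℤ)^i * (k.choose i : ℤ) * (((m-1)-i).choose (a+1) : ℤ) * ((n+i).choose b : ℤ)) = KMG k (a+1) b (m-1) n from rfl]
      rw [ih a (b+1) (m-1) n (by omega) (by omega), ih (a+1) b (m-1) n (by omega) (by omega)]
      by_cases hc : a + b + 2 = k + 1
      · rw [if_pos (show a + (b+1) = k by omega), if_pos (show a + 1 + b = k by omega),
          if_pos (show a + 1 + (b+1) = k + 1 by omega)]
        have hch : ((k+1).choose (a+1) : ℤ) = k.choose a + k.choose (a+1) := by
          exact_mod_cast Nat.choose_succ_succ k a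
        rw [hch]
        ring
      · rw [if_neg (show ¬(a + (b+1) = k) by omega), if_neg (show ¬(a + 1 + b = k) by omega),
          if_neg (show ¬(a + 1 + (b+1) = k + 1) by omega)]
        ring

/-- The Karlsson–Minton identity in elementary factorial form: for integers
`0 ≤ l ≤ k ≤ min m n`,
`∑_{i = max(0, 2k-l-n)}^{min(k, m-l)} (-1)^i (m-i)! (n-k+i)! / (i! (k-i)! (m-l-i)! (n+l-2k+i)!)
  = (-1)^{k+l}`.
(Note that for natural numbers `2 * k - l - n = max (0, 2k - l - n)` by truncated subtraction,
and within the summation range all factorial arguments are nonnegative, so truncated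
subtraction agrees with integer subtraction throughout.) -/
theorem karlsson_minton (m n k l : ℕ) (hlk : l ≤ k) (hkm : k ≤ m) (hkn : k ≤ n) :
    ∑ i ∈ Finset.Icc (2 * k - l - n) (min k (m - l)),
      ((-1 : ℝ)) ^ i *
        (((m - i).factorial : ℝ) * ((n - k + i).factorial : ℝ)) /
          ((i.factorial : ℝ) * ((k - i).factorial : ℝ) * ((m - l - i).factorial : ℝ) *
            ((n + l + i - 2 * k).factorial : ℝ))
      = (-1 : ℝ) ^ (k + l) := by
  have hfne : ∀ j : ℕ, ((j.factorial : ℝ)) ≠ 0 :=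
    fun j => Nat.cast_ne_zero.mpr (Nat.factorial_ne_zero j)
  have hstep : ∀ i ∈ Finset.Icc (2 * k - l - n) (min k (m - l)),
      (-1:ℝ)^i * (((m - i).factorial : ℝ) * ((n - k + i).factorial : ℝ)) /
          ((i.factorial : ℝ) * ((k - i).factorial : ℝ) * ((m - l - i).factorial : ℝ) *
            ((n + l + i - 2 * k).factorial : ℝ))
        = ((l.factorial : ℝ) * ((k-l).factorial : ℝ) / (k.factorial : ℝ)) *
            ((-1:ℝ)^i * (k.choose i : ℝ) * ((m-i).choose l : ℝ) * ((n-k+i).choose (k-l) : ℝ)) := by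
    intro i hi'
    simp only [Finset.mem_Icc] at hi'
    obtain ⟨h1, h2⟩ := hi'
    have hik : i ≤ k := le_trans h2 (min_le_left _ _)
    have himl : i ≤ m - l := le_trans h2 (min_le_right _ _)
    have e1 : (m - i).choose l * l.factorial * (m - i - l).factorial = (m-i).factorial :=
      Nat.choose_mul_factorial_mul_factorial (by omega)
    have e2 : (n - k + i).choose (k-l) * (k-l).factorial * ((n-k+i) - (k-l)).factorial
        = (n-k+i).factorial := Nat.choose_mul_factorial_mul_factorial (by omega)
    have e3 : k.choose i * i.factorial * (k-i).factorial = k.factorial :=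
      Nat.choose_mul_factorial_mul_factorial hik
    have e4 : m - l - i = m - i - l := by omega
    have e5 : n + l + i - 2*k = (n - k + i) - (k - l) := by omega
    have E1 : ((m-i).factorial : ℝ)
        = ((m-i).choose l : ℝ) * (l.factorial : ℝ) * ((m-i-l).factorial : ℝ) := by
      exact_mod_cast (congrArg (fun t : ℕ => (t : ℝ)) e1).symm
    have E2 : ((n-k+i).factorial : ℝ)
        = ((n-k+i).choose (k-l) : ℝ) * ((k-l).factorial : ℝ) * (((n-k+i)-(k-l)).factorial : ℝ) := by
      exact_mod_cast (congrArg (fun t : ℕ => (t : ℝ)) e2).symm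
    have E3 : (k.factorial : ℝ)
        = (k.choose i : ℝ) * (i.factorial : ℝ) * ((k-i).factorial : ℝ) := by
      exact_mod_cast (congrArg (fun t : ℕ => (t : ℝ)) e3).symm
    have hchi : (k.choose i : ℝ) ≠ 0 := Nat.cast_ne_zero.mpr (Nat.choose_pos hik).ne'
    rw [e4, e5, E1, E2, E3]
    field_simp
  rw [Finset.sum_congr rfl hstep, ← Finset.mul_sum]
  have hsub : Finset.Icc (2 * k - l - n) (min k (m - l)) ⊆ Finset.range (k+1) := by
    intro x hx
    simp only [Finset.mem_Icc, Finset.mem_range] at *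
    omega
  have hvan : ∀ x ∈ Finset.range (k+1), x ∉ Finset.Icc (2 * k - l - n) (min k (m - l)) →
      (-1:ℝ)^x * (k.choose x : ℝ) * ((m-x).choose l : ℝ) * ((n-k+x).choose (k-l) : ℝ) = 0 := by
    intro x hx hnx
    simp only [Finset.mem_range] at hx
    simp only [Finset.mem_Icc, not_and_or, not_le] at hnx
    rcases hnx with h | h
    · have : n - k + x < k - l := by omega
      rw [Nat.choose_eq_zero_of_lt this]
      push_cast; ring
    · have : m - x < l := by omega
      rw [Nat.choose_eq_zero_of_lt this]
      push_cast; ring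
  rw [Finset.sum_subset hsub hvan]
  have hcast : (∑ i ∈ Finset.range (k+1),
        (-1:ℝ)^i * (k.choose i : ℝ) * ((m-i).choose l : ℝ) * ((n-k+i).choose (k-l) : ℝ))
      = ((KMG k l (k-l) m (n-k) : ℤ) : ℝ) := by
    unfold KMG
    push_cast
    rfl
  rw [hcast, KM_main k l (k-l) m (n-k) hkm (by omega), if_pos (by omega : l + (k-l) = k)]
  have e6 : k.choose l * l.factorial * (k-l).factorial = k.factorial :=
    Nat.choose_mul_factorial_mul_factorial hlk
  have E6 : (k.factorial : ℝ) = (k.choose l : ℝ) * (l.factorial : ℝ) * ((k-l).factorial : ℝ) := by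
    exact_mod_cast (congrArg (fun t : ℕ => (t : ℝ)) e6).symm
  push_cast
  rw [E6]
  have hch : (k.choose l : ℝ) ≠ 0 := Nat.cast_ne_zero.mpr (Nat.choose_pos hlk).ne'
  field_simp
end

section
/- Let Q be a nondegenerate symmetric bilinear form on V_m making V_m a *-representation. Then Q(e_m, e_{−m}) ≠ 0. -/
open scoped TensorProduct

/-- `V m` is the (m+1)-dimensional real vector space underlying the irreducible
`sl₂(ℝ)`-module `V_m`. -/
abbrev V (m : ℕ) : Type := Fin (m + 1) → ℝ

/-- The standard basis of `V m`; `eb m i` represents the basis vector `e_{-m+2i}`. -/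
noncomputable def eb (m : ℕ) : Module.Basis (Fin (m + 1)) ℝ (V m) := Pi.basisFun ℝ (Fin (m + 1))

/-- `e m i` is the basis vector `e_{-m+2i}` of `V_m`, for `0 ≤ i ≤ m`. -/
noncomputable def e (m : ℕ) (i : Fin (m + 1)) : V m := eb m i

/-- The operator `X` on `V_m`: `X e_{-m+2i} = (m-i)(i+1) e_{-m+2(i+1)}`,
with the convention `e_{m+2} = 0` (for `i = m` the coefficient `(m-i)(i+1)` is `0`). -/
noncomputable def Xop (m : ℕ) : V m →ₗ[ℝ] V m :=
  (eb m).constr ℝ fun i =>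
    if h : (i : ℕ) < m then
      (((m : ℝ) - (i : ℕ)) * ((i : ℕ) + 1)) • e m ⟨(i : ℕ) + 1, by omega⟩
    else 0

/-- The operator `Y` on `V_m`: `Y e_{-m+2i} = e_{-m+2(i-1)}`,
with the convention `e_{-m-2} = 0`. -/
noncomputable def Yop (m : ℕ) : V m →ₗ[ℝ] V m :=
  (eb m).constr ℝ fun i =>
    if h : 0 < (i : ℕ) then e m ⟨(i : ℕ) - 1, by omega⟩ else 0

/-- The operator `H` on `V_m`: `H e_{-m+2i} = (-m+2i) e_{-m+2i}`. -/
noncomputable def Hop (m : ℕ) : V m →ₗ[ℝ] V m :=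
  (eb m).constr ℝ fun i => (-(m : ℝ) + 2 * (i : ℕ)) • e m i

/-- If a nondegenerate symmetric bilinear form `Q` makes `V_m` a `*`-representation,
then `Q(e_m, e_{-m}) ≠ 0`.  Here `e_m = e m (Fin.last m)` and `e_{-m} = e m 0`. -/
theorem qform_antidiag_ne_zero (m : ℕ) (Q : LinearMap.BilinForm ℝ (V m))
    (hQsym : ∀ u v : V m, Q u v = Q v u)
    (hQnd : ∀ u : V m, (∀ v : V m, Q u v = 0) → u = 0)
    (hQX : ∀ u v : V m, Q (Xop m u) v = Q u (Xop m v))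
    (hQY : ∀ u v : V m, Q (Yop m u) v = Q u (Yop m v))
    (hQH : ∀ u v : V m, Q (Hop m u) v = - Q u (Hop m v)) :
    Q (e m (Fin.last m)) (e m 0) ≠ 0 := by
  intro h0
  have hH : ∀ i : Fin (m+1), Hop m (e m i) = (-(m:ℝ) + 2*((i:ℕ):ℝ)) • e m i := by
    intro i
    simp [Hop, e, Module.Basis.constr_basis]
  have key : ∀ j : Fin (m+1), Q (e m (Fin.last m)) (e m j) = 0 := by
    intro j
    by_cases hj : j = 0
    · subst hj; exact h0
    · have h := hQH (e m (Fin.last m)) (e m j)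
      rw [hH, hH] at h
      simp only [map_smul, LinearMap.smul_apply, smul_eq_mul, Fin.val_last] at h
      have hj' : 0 < (j:ℕ) := Nat.pos_of_ne_zero (fun hh => hj (Fin.ext hh))
      have hj2 : (0:ℝ) < ((j:ℕ):ℝ) := by exact_mod_cast hj'
      nlinarith [h, hj2]
  have hext : Q (e m (Fin.last m)) = 0 := by
    apply Module.Basis.ext (eb m)
    intro j
    simpa [e] using key j
  have hzero : e m (Fin.last m) = 0 := by
    apply hQnd
    intro v
    rw [hext]; rfl
  have : (e m (Fin.last m)) (Fin.last m) = 1 := by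
    simp [e, eb, Pi.basisFun_apply]
  rw [hzero] at this
  simp at this
end

section
/- Let m, n be nonnegative integers and 0 ≤ k ≤ min(m, n), and set b_{−m−n+2k} = Σ_{i=0}^{k} (−1)^i · e_{−m+2i} ⊗ ẽ_{−n+2(k−i)} ∈ V_m ⊗ V_n. Then b_{−m−n+2k} is nonzero, satisfies H b_{−m−n+2k} = (−m−n+2k) b_{−m−n+2k} and Y b_{−m−n+2k} = 0, and every vector v ∈ V_m ⊗ V_n with H v = (−m−n+2k) v and Y v = 0 is a scalar multiple of b_{−m−n+2k}. -/
open scoped TensorProduct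

set_option maxHeartbeats 1000000
set_option synthInstance.maxHeartbeats 400000

/-- The action of `X` on `V_m ⊗ V_n`: `X (u ⊗ v) = (X u) ⊗ v + u ⊗ (X v)`. -/
noncomputable def Xt (m n : ℕ) : (V m ⊗[ℝ] V n) →ₗ[ℝ] (V m ⊗[ℝ] V n) :=
  LinearMap.rTensor (V n) (Xop m) + LinearMap.lTensor (V m) (Xop n)

/-- The action of `Y` on `V_m ⊗ V_n`: `Y (u ⊗ v) = (Y u) ⊗ v + u ⊗ (Y v)`. -/
noncomputable def Yt (m n : ℕ) : (V m ⊗[ℝ] V n) →ₗ[ℝ] (V m ⊗[ℝ] V n) :=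
  LinearMap.rTensor (V n) (Yop m) + LinearMap.lTensor (V m) (Yop n)

/-- The action of `H` on `V_m ⊗ V_n`: `H (u ⊗ v) = (H u) ⊗ v + u ⊗ (H v)`. -/
noncomputable def Ht (m n : ℕ) : (V m ⊗[ℝ] V n) →ₗ[ℝ] (V m ⊗[ℝ] V n) :=
  LinearMap.rTensor (V n) (Hop m) + LinearMap.lTensor (V m) (Hop n)

lemma e_apply (m : ℕ) (i j : Fin (m+1)) : e m i j = if j = i then 1 else 0 := by
  simp [e, eb, Pi.single_apply]

lemma Hop_apply (m : ℕ) (x : V m) (i : Fin (m+1)) :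
    Hop m x i = (-(m:ℝ) + 2*(i:ℕ)) * x i := by
  simp only [Hop, Module.Basis.constr_apply_fintype, Module.Basis.equivFun_apply]
  rw [Finset.sum_apply]
  simp only [Pi.smul_apply, e_apply, smul_eq_mul, mul_ite, mul_one, mul_zero, eb,
    Pi.basisFun_repr]
  rw [Finset.sum_ite_eq]
  simp [mul_comm]

lemma Yop_apply (m : ℕ) (x : V m) (i : Fin (m+1)) :
    Yop m x i = if h : (i:ℕ) < m then x ⟨(i:ℕ)+1, by omega⟩ else 0 := by
  simp only [Yop, Module.Basis.constr_apply_fintype, Module.Basis.equivFun_apply, eb, Pi.basisFun_repr]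
  rw [Finset.sum_apply]
  by_cases h : (i:ℕ) < m
  · rw [dif_pos h, Finset.sum_eq_single (⟨(i:ℕ)+1, by omega⟩ : Fin (m+1))]
    · simp [e_apply, Fin.ext_iff]
    · intro j _ hj
      simp only [Pi.smul_apply, smul_eq_mul]
      rw [dite_apply]
      split_ifs with h0
      · rw [e_apply, if_neg, mul_zero]
        intro heq
        apply hj
        rw [Fin.ext_iff] at heq ⊢
        simp only [Fin.val_mk] at heq ⊢
        omega
      · simp
    · simp
  · rw [dif_neg h, Finset.sum_eq_zero]
    intro j _
    simp only [Pi.smul_apply, smul_eq_mul]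
    rw [dite_apply]
    split_ifs with h0
    · rw [e_apply, if_neg, mul_zero]
      intro heq
      rw [Fin.ext_iff] at heq
      simp at heq
      omega
    · simp

noncomputable def Bt (m n : ℕ) : Module.Basis (Fin (m+1) × Fin (n+1)) ℝ (V m ⊗[ℝ] V n) :=
  (eb m).tensorProduct (eb n)

lemma Bt_repr_tmul (m n : ℕ) (x : V m) (y : V n) (p : Fin (m+1) × Fin (n+1)) :
    (Bt m n).repr (x ⊗ₜ[ℝ] y) p = x p.1 * y p.2 := by
  obtain ⟨i, j⟩ := p
  rw [Bt, Module.Basis.tensorProduct_repr_tmul_apply]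
  simp [eb, mul_comm]

lemma Ht_repr (m n : ℕ) (v : V m ⊗[ℝ] V n) (i : Fin (m+1)) (j : Fin (n+1)) :
    (Bt m n).repr (Ht m n v) (i, j)
      = (-(m:ℝ) - n + 2*((i:ℕ) + (j:ℕ))) * (Bt m n).repr v (i, j) := by
  induction v using TensorProduct.induction_on with
  | zero => simp
  | tmul x y =>
      simp only [Ht, LinearMap.add_apply, LinearMap.rTensor_tmul, LinearMap.lTensor_tmul,
        map_add, Finsupp.add_apply, Bt_repr_tmul, Hop_apply]
      ring
  | add u w hu hw =>
      simp only [map_add, Finsupp.add_apply, hu, hw]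
      ring

lemma Yt_repr (m n : ℕ) (v : V m ⊗[ℝ] V n) (i : Fin (m+1)) (j : Fin (n+1)) :
    (Bt m n).repr (Yt m n v) (i, j)
      = (if h : (i:ℕ) < m then (Bt m n).repr v (⟨(i:ℕ)+1, by omega⟩, j) else 0)
        + (if h : (j:ℕ) < n then (Bt m n).repr v (i, ⟨(j:ℕ)+1, by omega⟩) else 0) := by
  induction v using TensorProduct.induction_on with
  | zero => simp
  | tmul x y =>
      simp only [Yt, LinearMap.add_apply, LinearMap.rTensor_tmul, LinearMap.lTensor_tmul,
        map_add, Finsupp.add_apply, Bt_repr_tmul, Yop_apply]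
      split_ifs <;> ring
  | add u w hu hw =>
      simp only [map_add, Finsupp.add_apply, hu, hw]
      split_ifs <;> ring

/-- The vector `b_{-m-n+2k} = ∑_{i=0}^{k} (-1)^i e_{-m+2i} ⊗ ẽ_{-n+2(k-i)}` in `V_m ⊗ V_n`. -/
noncomputable def bvec (m n k : ℕ) (hkm : k ≤ m) (hkn : k ≤ n) : V m ⊗[ℝ] V n :=
  ∑ i : Fin (k + 1), ((-1 : ℝ)) ^ (i : ℕ) •
    (e m ⟨(i : ℕ), by omega⟩ ⊗ₜ[ℝ] e n ⟨k - (i : ℕ), by omega⟩)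

lemma bvec_repr (m n k : ℕ) (hkm : k ≤ m) (hkn : k ≤ n) (a : Fin (m+1)) (b : Fin (n+1)) :
    (Bt m n).repr (bvec m n k hkm hkn) (a, b)
      = if (a:ℕ) + (b:ℕ) = k then (-1:ℝ)^(a:ℕ) else 0 := by
  rw [bvec, map_sum, Finsupp.finset_sum_apply]
  simp only [map_smul, Finsupp.smul_apply, Bt_repr_tmul, smul_eq_mul, e_apply,
    Fin.ext_iff, Fin.val_mk]
  by_cases h : (a:ℕ) + (b:ℕ) = k
  · rw [Finset.sum_eq_single (⟨(a:ℕ), by omega⟩ : Fin (k+1))]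
    · simp only [h, show (b:ℕ) = k - (a:ℕ) from by omega, if_true]
      rw [if_pos (show (a:ℕ) + (k - (a:ℕ)) = k from by omega)]
      simp
    · intro i _ hi
      rw [if_neg, zero_mul, mul_zero]
      intro heq
      exact hi (Fin.ext (by simp [← heq]))
    · simp
  · rw [if_neg h, Finset.sum_eq_zero]
    intro i _
    split_ifs <;> first | (exfalso; omega) | ring

/-- The vector `b_{-m-n+2k}` is a nonzero vector of weight `-m-n+2k` in `V_m ⊗ V_n`
killed by `Y`, and it spans the kernel of `Y` on the weight-`(-m-n+2k)` subspace. -/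
theorem bvec_spans_kernel (m n k : ℕ) (hkm : k ≤ m) (hkn : k ≤ n) :
    bvec m n k hkm hkn ≠ 0 ∧
    Ht m n (bvec m n k hkm hkn) = (-(m : ℝ) - n + 2 * k) • bvec m n k hkm hkn ∧
    Yt m n (bvec m n k hkm hkn) = 0 ∧
    ∀ v : V m ⊗[ℝ] V n, Ht m n v = (-(m : ℝ) - n + 2 * k) • v → Yt m n v = 0 →
      ∃ c : ℝ, v = c • bvec m n k hkm hkn := by
  refine ⟨?_, ?_, ?_, ?_⟩
  · intro h
    have := congrArg (fun w => (Bt m n).repr w (⟨0, by omega⟩, ⟨k, by omega⟩)) h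
    simp only [bvec_repr, map_zero, Finsupp.coe_zero, Pi.zero_apply, Fin.val_mk] at this
    norm_num at this
  · refine (Bt m n).repr.injective (Finsupp.ext fun p => ?_)
    obtain ⟨a, b⟩ := p
    rw [Ht_repr, map_smul, Finsupp.smul_apply, smul_eq_mul, bvec_repr]
    by_cases h : (a:ℕ) + (b:ℕ) = k
    · have h' : ((a:ℕ) : ℝ) + ((b:ℕ) : ℝ) = (k : ℝ) := by exact_mod_cast congrArg (Nat.cast : ℕ → ℝ) h
      rw [h']
    · rw [if_neg h, mul_zero, mul_zero]
  · refine (Bt m n).repr.injective (Finsupp.ext fun p => ?_)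
    obtain ⟨a, b⟩ := p
    rw [Yt_repr, map_zero]
    simp only [Finsupp.coe_zero, Pi.zero_apply, bvec_repr, Fin.val_mk]
    by_cases h : (a:ℕ) + (b:ℕ) + 1 = k
    · rw [dif_pos (by omega), dif_pos (by omega), if_pos (by omega), if_pos (by omega)]
      ring
    · split_ifs with h1 h2 h3 h4 h5 h6 h7 <;> first | omega | ring
  · intro v hH hY
    set c : Fin (m+1) × Fin (n+1) → ℝ := fun p => (Bt m n).repr v p with hc
    have hzero : ∀ (a : Fin (m+1)) (b : Fin (n+1)), (a:ℕ) + (b:ℕ) ≠ k → c (a, b) = 0 := by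
      intro a b hab
      have hab' := congrArg (fun w => (Bt m n).repr w (a, b)) hH
      simp only [Ht_repr, map_smul, Finsupp.smul_apply, smul_eq_mul] at hab'
      have hne : (-(m:ℝ) - n + 2*(((a:ℕ):ℝ) + ((b:ℕ):ℝ))) ≠ (-(m:ℝ) - n + 2*(k:ℝ)) := by
        intro hx
        have hx2 : (((a:ℕ):ℝ) + ((b:ℕ):ℝ)) = (k : ℝ) := by linarith
        exact hab (by exact_mod_cast hx2)
      have h2 : ((-(m:ℝ) - n + 2*(((a:ℕ):ℝ) + ((b:ℕ):ℝ))) - (-(m:ℝ) - n + 2*(k:ℝ))) * c (a, b) = 0 := by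
        rw [sub_mul, hc]
        simp only
        rw [hab']
        ring
      rcases mul_eq_zero.mp h2 with h3 | h3
      · exact absurd (by linarith [sub_eq_zero.mp h3]) hne
      · exact h3
    have hrec : ∀ i : ℕ, (hik : i ≤ k) →
        c (⟨i, by omega⟩, ⟨k - i, by omega⟩) = (-1:ℝ)^i * c (⟨0, by omega⟩, ⟨k, by omega⟩) := by
      intro i
      induction i with
      | zero => intro _; simp
      | succ i ih =>
        intro hik
        have hik' : i ≤ k := by omega
        have hY' := congrArg (fun w => (Bt m n).repr w (⟨i, by omega⟩, ⟨k - i - 1, by omega⟩)) hY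
        simp only [Yt_repr, map_zero, Finsupp.coe_zero, Pi.zero_apply, Fin.val_mk] at hY'
        rw [dif_pos (by omega), dif_pos (by omega)] at hY'
        have e1 : c (⟨i + 1, by omega⟩, ⟨k - i - 1, by omega⟩)
            + c (⟨i, by omega⟩, ⟨k - i - 1 + 1, by omega⟩) = 0 := hY'
        have e2 : (⟨k - i - 1 + 1, by omega⟩ : Fin (n+1)) = ⟨k - i, by omega⟩ :=
          Fin.ext (by simp; omega)
        have e3 : (⟨k - i - 1, by omega⟩ : Fin (n+1)) = ⟨k - (i+1), by omega⟩ :=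
          Fin.ext (by simp; omega)
        rw [e2, e3, ih hik'] at e1
        have e4 : c (⟨i + 1, by omega⟩, ⟨k - (i+1), by omega⟩)
            = -((-1:ℝ)^i * c (⟨0, by omega⟩, ⟨k, by omega⟩)) := by linarith
        rw [e4]
        ring
    refine ⟨c (⟨0, by omega⟩, ⟨k, by omega⟩), ?_⟩
    refine (Bt m n).repr.injective (Finsupp.ext fun p => ?_)
    obtain ⟨a, b⟩ := p
    rw [map_smul, Finsupp.smul_apply, smul_eq_mul, bvec_repr]
    by_cases h : (a:ℕ) + (b:ℕ) = k
    · rw [if_pos h]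
      have ea : (⟨(a:ℕ), by omega⟩ : Fin (m+1)) = a := Fin.ext rfl
      have eb' : (⟨k - (a:ℕ), by omega⟩ : Fin (n+1)) = b := Fin.ext (by simp; omega)
      have hr := hrec (a:ℕ) (by omega)
      rw [ea, eb'] at hr
      rw [show (Bt m n).repr v (a, b) = c (a, b) from rfl, hr]
      ring
    · rw [if_neg h, mul_zero]
      exact hzero a b h
end

section
/- Let m, n be nonnegative integers, let 0 ≤ k ≤ min(m, n), set 𝔰_k = m + n − 2k and b_{−𝔰_k} = Σ_{i=0}^{k} (−1)^i · e_{−m+2i} ⊗ ẽ_{−n+2(k−i)} ∈ V_m ⊗ V_n. Then X^{𝔰_k} b_{−𝔰_k} = 𝔰_k! · Σ_{l=0}^{k} (−1)^{k+l} · ( (m−l)! (n−k+l)! / ( l! (k−l)! ) ) · e_{m−2l} ⊗ ẽ_{n−2(k−l)}. -/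
open scoped TensorProduct

section Aux
open Finset



lemma trinom (M x j : ℕ) (hj : j ≤ M) :
    (M.choose j) * ((M - j).choose x) = (M.choose x) * ((M - x).choose j) := by
  rcases le_or_gt (x + j) M with h | h
  · have h1 := Nat.choose_mul (n := M) (show x ≤ x + j by omega)
    have h2 := Nat.choose_mul (n := M) (show j ≤ x + j by omega)
    rw [Nat.add_sub_cancel_left] at h1
    have hxj : x + j - j = x := by omega
    rw [hxj] at h2
    have hsymm : (x + j).choose x = (x + j).choose j := by
      have := Nat.choose_symm (show j ≤ x + j by omega)
      have hxx : x + j - j = x := by omega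
      rw [hxx] at this
      omega
    rw [← h2, ← h1, hsymm]
  · have hz1 : (M - j).choose x = 0 := Nat.choose_eq_zero_of_lt (by omega)
    rcases le_or_gt x M with hx | hx
    · have hz2 : (M - x).choose j = 0 := Nat.choose_eq_zero_of_lt (by omega)
      rw [hz1, hz2]; ring
    · have hz2 : M.choose x = 0 := Nat.choose_eq_zero_of_lt (by omega)
      rw [hz1, hz2]; ring

lemma inner_alt (M x : ℕ) :
    ∑ j ∈ Finset.range (M + 1), (-1 : ℤ) ^ j * (M.choose j) * ((M - j).choose x)
      = if x = M then 1 else 0 := by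
  have h1 : ∀ j ∈ Finset.range (M + 1),
      (-1 : ℤ) ^ j * (M.choose j) * ((M - j).choose x)
        = (M.choose x : ℤ) * ((-1 : ℤ) ^ j * ((M - x).choose j)) := by
    intro j hj
    simp only [Finset.mem_range] at hj
    have h := trinom M x j (by omega)
    have h' : ((M.choose j) * ((M - j).choose x) : ℤ) = (M.choose x) * ((M - x).choose j) := by
      exact_mod_cast congrArg (Nat.cast : ℕ → ℤ) h
    linear_combination ((-1 : ℤ) ^ j) * h'
  rw [Finset.sum_congr rfl h1, ← Finset.mul_sum]
  have h2 : ∑ j ∈ Finset.range (M + 1), (-1 : ℤ) ^ j * ((M - x).choose j)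
      = ∑ j ∈ Finset.range ((M - x) + 1), (-1 : ℤ) ^ j * ((M - x).choose j) := by
    symm
    apply Finset.sum_subset
    · intro a ha; simp only [Finset.mem_range] at *; omega
    · intro a ha ha'
      simp only [Finset.mem_range] at ha ha'
      have : (M - x).choose a = 0 := Nat.choose_eq_zero_of_lt (by omega)
      rw [this]; push_cast; ring
  rw [h2, Int.alternating_sum_range_choose]
  rcases le_or_gt x M with hx | hx
  · rcases eq_or_lt_of_le hx with rfl | hlt
    · simp
    · have : ¬ (x = M) := by omega
      have h3 : ¬ (M - x = 0) := by omega
      simp [this, h3]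
  · have hz : M.choose x = 0 := Nat.choose_eq_zero_of_lt hx
    have : ¬ (x = M) := by omega
    simp [this, hz]

lemma S_lemma (K x y : ℕ) (hy : y ≤ K) :
    ∑ i ∈ Finset.range (K + 1),
        (-1 : ℤ) ^ i * (K.choose i) * ((K - i).choose x) * (i.choose y)
      = if x + y = K then (-1 : ℤ) ^ y * (K.choose y) else 0 := by
  have hsupp : ∑ i ∈ Finset.range (K + 1),
      (-1 : ℤ) ^ i * (K.choose i) * ((K - i).choose x) * (i.choose y)
      = ∑ i ∈ Finset.Ico y (K + 1),
        (-1 : ℤ) ^ i * (K.choose i) * ((K - i).choose x) * (i.choose y) := by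
    symm
    apply Finset.sum_subset
    · intro a ha; simp only [Finset.mem_Ico, Finset.mem_range] at *; omega
    · intro a ha ha'
      simp only [Finset.mem_Ico, Finset.mem_range] at ha ha'
      have : a.choose y = 0 := Nat.choose_eq_zero_of_lt (by omega)
      rw [this]; push_cast; ring
  rw [hsupp, Finset.sum_Ico_eq_sum_range]
  have hKy : K + 1 - y = (K - y) + 1 := by omega
  rw [hKy]
  have h1 : ∀ j ∈ Finset.range ((K - y) + 1),
      (-1 : ℤ) ^ (y + j) * (K.choose (y + j)) * ((K - (y + j)).choose x) * ((y + j).choose y)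
        = ((-1 : ℤ) ^ y * (K.choose y)) *
            ((-1 : ℤ) ^ j * ((K - y).choose j) * (((K - y) - j).choose x)) := by
    intro j hj
    simp only [Finset.mem_range] at hj
    have htri := Nat.choose_mul (n := K) (show y ≤ y + j by omega)
    have hyj : y + j - y = j := by omega
    rw [hyj] at htri
    have htri' : ((K.choose (y + j)) * ((y + j).choose y) : ℤ)
        = (K.choose y) * ((K - y).choose j) := by exact_mod_cast congrArg (Nat.cast : ℕ → ℤ) htri
    have hsub : K - (y + j) = (K - y) - j := by omega
    rw [hsub, pow_add]
    linear_combination ((-1 : ℤ) ^ y * (-1 : ℤ) ^ j * (((K - y) - j).choose x : ℤ)) * htri'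
  rw [Finset.sum_congr rfl h1, ← Finset.mul_sum, inner_alt (K - y) x]
  rcases eq_or_ne (x + y) K with h | h
  · rw [if_pos (show x = K - y by omega), if_pos h]
    ring
  · rw [if_neg (show ¬ x = K - y by omega), if_neg h]
    ring

lemma star (m n k l : ℕ) (hkm : k ≤ m) (hkn : k ≤ n) (hlk : l ≤ k) :
    ∑ i ∈ Finset.range (k + 1),
        (-1 : ℤ) ^ i * (k.choose i) * ((m - i).choose l) * ((n - k + i).choose (k - l))
      = (-1 : ℤ) ^ (k + l) * (k.choose l) := by
  have expand : ∀ i ∈ Finset.range (k + 1),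
      (-1 : ℤ) ^ i * (k.choose i) * ((m - i).choose l) * ((n - k + i).choose (k - l))
        = ∑ x ∈ Finset.range (l + 1), ∑ y ∈ Finset.range ((k - l) + 1),
            ((m - k).choose x : ℤ) * ((n - k).choose y) *
              ((-1 : ℤ) ^ i * (k.choose i) * ((k - i).choose (l - x)) * (i.choose ((k - l) - y))) := by
    intro i hi
    simp only [Finset.mem_range] at hi
    have hmi : m - i = (m - k) + (k - i) := by omega
    have hni : n - k + i = (n - k) + i := by omega
    rw [hmi, hni, Nat.add_choose_eq, Nat.add_choose_eq,
      Finset.Nat.sum_antidiagonal_eq_sum_range_succ_mk,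
      Finset.Nat.sum_antidiagonal_eq_sum_range_succ_mk]
    push_cast
    rw [mul_assoc, Finset.sum_mul_sum, Finset.mul_sum]
    apply Finset.sum_congr rfl
    intro x hx
    rw [Finset.mul_sum]
    apply Finset.sum_congr rfl
    intro y hy
    ring
  rw [Finset.sum_congr rfl expand]
  rw [Finset.sum_comm]
  have swap2 : ∀ x ∈ Finset.range (l + 1),
      (∑ i ∈ Finset.range (k + 1), ∑ y ∈ Finset.range ((k - l) + 1),
        ((m - k).choose x : ℤ) * ((n - k).choose y) *
          ((-1 : ℤ) ^ i * (k.choose i) * ((k - i).choose (l - x)) * (i.choose ((k - l) - y))))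
      = ∑ y ∈ Finset.range ((k - l) + 1),
          ((m - k).choose x : ℤ) * ((n - k).choose y) *
            (if (l - x) + ((k - l) - y) = k then (-1 : ℤ) ^ ((k - l) - y) * (k.choose ((k - l) - y)) else 0) := by
    intro x hx
    rw [Finset.sum_comm]
    apply Finset.sum_congr rfl
    intro y hy
    rw [← Finset.mul_sum, S_lemma k (l - x) ((k - l) - y) (by omega)]
  rw [Finset.sum_congr rfl swap2]
  have hy0 : ∀ y ∈ Finset.range ((k - l) + 1), y ≠ 0 →
      ((m - k).choose 0 : ℤ) * ((n - k).choose y) *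
        (if (l - 0) + ((k - l) - y) = k then (-1 : ℤ) ^ ((k - l) - y) * (k.choose ((k - l) - y)) else 0) = 0 := by
    intro y hy hy'
    simp only [Finset.mem_range] at hy
    rw [if_neg (by omega)]
    ring
  have hx0 : ∀ x ∈ Finset.range (l + 1), x ≠ 0 →
      (∑ y ∈ Finset.range ((k - l) + 1),
        ((m - k).choose x : ℤ) * ((n - k).choose y) *
          (if (l - x) + ((k - l) - y) = k then (-1 : ℤ) ^ ((k - l) - y) * (k.choose ((k - l) - y)) else 0)) = 0 := by
    intro x hx hx'
    simp only [Finset.mem_range] at hx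
    apply Finset.sum_eq_zero
    intro y hy
    simp only [Finset.mem_range] at hy
    rw [if_neg (by omega)]
    ring
  rw [Finset.sum_eq_single_of_mem 0 (Finset.mem_range.2 (by omega)) hx0,
    Finset.sum_eq_single_of_mem 0 (Finset.mem_range.2 (by omega)) hy0,
    if_pos (by omega : (l - 0) + ((k - l) - 0) = k)]
  simp only [Nat.sub_zero, Nat.choose_zero_right, Nat.cast_one]
  rw [Nat.choose_symm hlk]
  have hsign : (-1 : ℤ) ^ (k - l) = (-1 : ℤ) ^ (k + l) := by
    have h2 : k + l = (k - l) + 2 * l := by omega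
    rw [h2, pow_add, pow_mul]
    norm_num
  rw [hsign]
  ring

noncomputable def ee (m i : ℕ) : V m := if h : i ≤ m then e m ⟨i, by omega⟩ else 0

lemma ee_of_le {m i : ℕ} (h : i ≤ m) (h' : i < m + 1) : ee m i = e m ⟨i, h'⟩ := by
  rw [ee, dif_pos h]

lemma ee_of_gt {m i : ℕ} (h : m < i) : ee m i = 0 := dif_neg (by omega)

lemma Xop_ee (m i : ℕ) : Xop m (ee m i) = (((m - i) * (i + 1) : ℕ) : ℝ) • ee m (i + 1) := by
  rcases le_or_gt i m with h | h
  · rw [ee_of_le h (by omega)]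
    have he : e m ⟨i, by omega⟩ = eb m ⟨i, by omega⟩ := rfl
    rw [he, Xop, Module.Basis.constr_basis]
    rcases lt_or_eq_of_le h with hlt | rfl
    · rw [dif_pos (show ((⟨i, by omega⟩ : Fin (m + 1)) : ℕ) < m from hlt)]
      rw [ee_of_le (show i + 1 ≤ m by omega) (by omega)]
      congr 1
      push_cast [Nat.cast_sub h]
      ring
    · rw [dif_neg (show ¬ ((⟨i, by omega⟩ : Fin (i + 1)) : ℕ) < i by simp)]
      rw [ee_of_gt (show i < i + 1 by omega)]
      rw [Nat.sub_self]
      simp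
  · rw [ee_of_gt h, ee_of_gt (by omega : m < i + 1)]
    simp

lemma Xop_pow_ee (m : ℕ) : ∀ (a i : ℕ), (Xop m ^ a) (ee m i)
    = (((m - i).descFactorial a * (i + 1).ascFactorial a : ℕ) : ℝ) • ee m (i + a) := by
  intro a
  induction a with
  | zero => intro i; simp
  | succ a ih =>
    intro i
    rw [pow_succ, Module.End.mul_apply, Xop_ee, map_smul, ih (i + 1), smul_smul,
      ← Nat.cast_mul]
    have hnat : ((m - i) * (i + 1)) * ((m - (i + 1)).descFactorial a * ((i + 1) + 1).ascFactorial a)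
        = (m - i).descFactorial (a + 1) * (i + 1).ascFactorial (a + 1) := by
      have hasc : (i + 1).ascFactorial (a + 1) = (i + 1) * ((i + 2)).ascFactorial a := by
        have h1 := Nat.succ_ascFactorial (i + 1) a
        rw [Nat.ascFactorial_succ]
        exact h1.symm
      rcases Nat.eq_zero_or_pos (m - i) with h0 | h0
      · have h1 : m - (i + 1) = 0 := by omega
        rw [h0, h1, Nat.zero_descFactorial_succ]
        rcases a with _ | a
        · simp
        · rw [Nat.zero_descFactorial_succ]; ring
      · obtain ⟨t, ht⟩ : ∃ t, m - i = t + 1 := ⟨m - i - 1, by omega⟩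
        have h2 : m - (i + 1) = t := by omega
        rw [ht, h2, Nat.succ_descFactorial_succ, hasc]
        ring
    rw [hnat]
    have : i + 1 + a = i + (a + 1) := by omega
    rw [this]

lemma Xt_pow_tmul (m n t : ℕ) (u : V m) (v : V n) :
    (Xt m n ^ t) (u ⊗ₜ[ℝ] v)
      = ∑ a ∈ Finset.range (t + 1),
          (t.choose a) • ((Xop m ^ a) u ⊗ₜ[ℝ] (Xop n ^ (t - a)) v) := by
  have hc : Commute (LinearMap.rTensor (V n) (Xop m)) (LinearMap.lTensor (V m) (Xop n)) := by
    unfold Commute SemiconjBy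
    rw [Module.End.mul_eq_comp, Module.End.mul_eq_comp, LinearMap.rTensor_comp_lTensor,
      LinearMap.lTensor_comp_rTensor]
  rw [Xt, hc.add_pow, LinearMap.sum_apply]
  apply Finset.sum_congr rfl
  intro a ha
  rw [Module.End.mul_apply, Module.End.mul_apply, Module.End.natCast_apply, map_nsmul, map_nsmul,
    LinearMap.rTensor_pow, LinearMap.lTensor_pow, LinearMap.lTensor_tmul, LinearMap.rTensor_tmul]

noncomputable def tv (m n p q : ℕ) : V m ⊗[ℝ] V n := ee m p ⊗ₜ[ℝ] ee n q

lemma tv_zero_left {m n p q : ℕ} (h : m < p) : tv m n p q = 0 := by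
  rw [tv, ee_of_gt h, TensorProduct.zero_tmul]

lemma tv_zero_right {m n p q : ℕ} (h : n < q) : tv m n p q = 0 := by
  rw [tv, ee_of_gt h, TensorProduct.tmul_zero]

noncomputable def cc (m n k s i a : ℕ) : ℝ :=
  (-1 : ℝ) ^ i * ((s.choose a : ℕ) : ℝ)
    * (((m - i).descFactorial a * (i + 1).ascFactorial a : ℕ) : ℝ)
    * (((n - (k - i)).descFactorial (s - a) * ((k - i) + 1).ascFactorial (s - a) : ℕ) : ℝ)

noncomputable def dd (m n k s i l : ℕ) : ℝ :=
  if i + l ≤ m ∧ m ≤ i + l + s then cc m n k s i (m - l - i) else 0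

lemma stepA (m n k s i : ℕ) (hkm : k ≤ m) (hkn : k ≤ n) (hik : i ≤ k) (hs : s + 2 * k = m + n) :
    ∑ a ∈ Finset.range (s + 1), cc m n k s i a • tv m n (i + a) ((k - i) + (s - a))
      = ∑ l ∈ Finset.range (k + 1), dd m n k s i l • tv m n (m - l) (n - k + l) := by
  have hL : ∑ a ∈ (Finset.range (s + 1)).filter (fun a => m - k ≤ i + a ∧ i + a ≤ m),
      cc m n k s i a • tv m n (i + a) ((k - i) + (s - a))
      = ∑ a ∈ Finset.range (s + 1), cc m n k s i a • tv m n (i + a) ((k - i) + (s - a)) := by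
    apply Finset.sum_filter_of_ne
    intro a ha hne
    simp only [Finset.mem_range] at ha
    by_contra hP
    rcases le_or_gt (i + a) m with h1 | h1
    · have h2 : n < (k - i) + (s - a) := by omega
      exact hne (by rw [tv_zero_right h2, smul_zero])
    · exact hne (by rw [tv_zero_left h1, smul_zero])
  have hR : ∑ l ∈ (Finset.range (k + 1)).filter (fun l => i + l ≤ m ∧ m ≤ i + l + s),
      dd m n k s i l • tv m n (m - l) (n - k + l)
      = ∑ l ∈ Finset.range (k + 1), dd m n k s i l • tv m n (m - l) (n - k + l) := by
    apply Finset.sum_filter_of_ne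
    intro l hl hne
    by_contra hQ
    exact hne (by rw [dd, if_neg hQ, zero_smul])
  rw [← hL, ← hR]
  apply Finset.sum_nbij' (fun a => m - i - a) (fun l => m - i - l)
  · intro a ha
    simp only [Finset.mem_filter, Finset.mem_range] at *
    omega
  · intro l hl
    simp only [Finset.mem_filter, Finset.mem_range] at *
    omega
  · intro a ha
    simp only [Finset.mem_filter, Finset.mem_range] at ha
    omega
  · intro l hl
    simp only [Finset.mem_filter, Finset.mem_range] at hl
    omega
  · intro a ha
    simp only [Finset.mem_filter, Finset.mem_range] at ha
    have e0 : m - (m - i - a) - i = a := by omega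
    have e1 : m - (m - i - a) = i + a := by omega
    have e2 : n - k + (m - i - a) = (k - i) + (s - a) := by omega
    rw [dd, if_pos (by omega), e0, e1, e2]

lemma cast_descFactorial (x y : ℕ) :
    (((x + y).descFactorial y : ℕ) : ℝ) = ((x + y).factorial : ℝ) / (x.factorial : ℝ) := by
  have h := Nat.factorial_mul_descFactorial (show y ≤ x + y by omega)
  rw [Nat.add_sub_cancel] at h
  rw [eq_div_iff (by positivity)]
  exact_mod_cast (mul_comm ((x + y).descFactorial y) (x.factorial)).trans h

lemma cast_ascFactorial (x y : ℕ) :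
    (((x + 1).ascFactorial y : ℕ) : ℝ) = ((x + y).factorial : ℝ) / (x.factorial : ℝ) := by
  have h := Nat.factorial_mul_ascFactorial x y
  rw [eq_div_iff (by positivity)]
  exact_mod_cast (mul_comm ((x + 1).ascFactorial y) (x.factorial)).trans h

lemma cast_add_choose (x y : ℕ) :
    (((x + y).choose x : ℕ) : ℝ)
      = ((x + y).factorial : ℝ) / ((x.factorial : ℝ) * (y.factorial : ℝ)) := by
  rw [Nat.cast_choose ℝ (show x ≤ x + y by omega)]
  have hxy : x + y - x = y := by omega
  rw [hxy]

lemma dd_eq (m n k s i l : ℕ) (hkm : k ≤ m) (hkn : k ≤ n) (hik : i ≤ k) (hlk : l ≤ k)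
    (hs : s + 2 * k = m + n) :
    dd m n k s i l
      = ((-1 : ℝ) ^ i * ((k.choose i * ((m - i).choose l) * ((n - k + i).choose (k - l)) : ℕ) : ℝ))
          * (((s.factorial * (m - l).factorial * (n - k + l).factorial : ℕ) : ℝ)
              / (k.factorial : ℝ)) := by
  rw [dd]
  by_cases hg : i + l ≤ m ∧ m ≤ i + l + s
  · rw [if_pos hg]
    obtain ⟨a, ha⟩ : ∃ a, m = i + l + a := ⟨m - l - i, by omega⟩
    obtain ⟨b, hb⟩ : ∃ b, n + i + l = 2 * k + b := ⟨n + i + l - 2 * k, by omega⟩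
    obtain ⟨p, hp⟩ : ∃ p, k = i + p := ⟨k - i, by omega⟩
    obtain ⟨q, hq⟩ : ∃ q, k = l + q := ⟨k - l, by omega⟩
    have h1 : m - l - i = a := by omega
    have h5 : s - a = b := by omega
    have h2 : m - i = l + a := by omega
    have h4 : n - (k - i) = q + b := by omega
    have h6 : k - i = p := by omega
    have h3 : m - l = i + a := by omega
    have h8 : n - k + i = q + b := by omega
    have h7 : k - l = q := by omega
    have h9 : n - k + l = p + b := by omega
    have h10 : s = a + b := by omega
    rw [cc, h1, h5, h2, h4, h6, h3, h8, h7, h9, h10, hp]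
    push_cast
    rw [cast_add_choose a b, cast_descFactorial l a, cast_ascFactorial i a,
      cast_descFactorial q b, cast_ascFactorial p b, cast_add_choose i p,
      cast_add_choose l a, cast_add_choose q b]
    have f0 : ∀ z : ℕ, (0 : ℝ) < (z.factorial : ℝ) := by
      intro z; exact_mod_cast z.factorial_pos
    field_simp
  · rw [if_neg hg]
    symm
    rcases le_or_gt (i + l) m with h1 | h1
    · have h2 : n - k + i < k - l := by omega
      rw [Nat.choose_eq_zero_of_lt h2]
      push_cast
      ring
    · have h2 : m - i < l := by omega
      rw [Nat.choose_eq_zero_of_lt h2]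
      push_cast
      ring

lemma stepC (m n k s l : ℕ) (hkm : k ≤ m) (hkn : k ≤ n) (hlk : l ≤ k) (hs : s + 2 * k = m + n) :
    ∑ i ∈ Finset.range (k + 1), dd m n k s i l
      = (s.factorial : ℝ) * ((-1 : ℝ) ^ (k + l) *
          (((m - l).factorial : ℝ) * ((n - k + l).factorial : ℝ)
            / ((l.factorial : ℝ) * ((k - l).factorial : ℝ)))) := by
  have h1 : ∀ i ∈ Finset.range (k + 1), dd m n k s i l
      = ((-1 : ℝ) ^ i * ((k.choose i * ((m - i).choose l) * ((n - k + i).choose (k - l)) : ℕ) : ℝ))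
          * (((s.factorial * (m - l).factorial * (n - k + l).factorial : ℕ) : ℝ)
              / (k.factorial : ℝ)) := by
    intro i hi
    simp only [Finset.mem_range] at hi
    exact dd_eq m n k s i l hkm hkn (by omega) hlk hs
  rw [Finset.sum_congr rfl h1, ← Finset.sum_mul]
  have hstar : ∑ i ∈ Finset.range (k + 1),
      ((-1 : ℝ) ^ i * ((k.choose i * ((m - i).choose l) * ((n - k + i).choose (k - l)) : ℕ) : ℝ))
      = (-1 : ℝ) ^ (k + l) * (k.choose l : ℝ) := by
    have h := star m n k l hkm hkn hlk
    calc ∑ i ∈ Finset.range (k + 1),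
        ((-1 : ℝ) ^ i * ((k.choose i * ((m - i).choose l) * ((n - k + i).choose (k - l)) : ℕ) : ℝ))
        = ((∑ i ∈ Finset.range (k + 1),
            (-1 : ℤ) ^ i * (k.choose i) * ((m - i).choose l) * ((n - k + i).choose (k - l)) : ℤ) : ℝ) := by
          push_cast
          apply Finset.sum_congr rfl
          intro i _
          ring
      _ = (-1 : ℝ) ^ (k + l) * (k.choose l : ℝ) := by rw [h]; push_cast; ring
  rw [hstar, Nat.cast_choose ℝ hlk]
  push_cast
  field_simp

lemma bvec_eq (m n k : ℕ) (hkm : k ≤ m) (hkn : k ≤ n) :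
    bvec m n k hkm hkn = ∑ i ∈ Finset.range (k + 1),
      (-1 : ℝ) ^ i • (ee m i ⊗ₜ[ℝ] ee n (k - i)) := by
  rw [bvec, ← Fin.sum_univ_eq_sum_range
    (fun i => (-1 : ℝ) ^ i • (ee m i ⊗ₜ[ℝ] ee n (k - i))) (k + 1)]
  apply Finset.sum_congr rfl
  intro i _
  rw [ee_of_le (show (i : ℕ) ≤ m by omega) (by omega),
    ee_of_le (show k - (i : ℕ) ≤ n by omega) (by omega)]


end Aux

/-- With `𝔰_k = m + n - 2k`,
`X^{𝔰_k} b_{-𝔰_k} = 𝔰_k! ∑_{l=0}^{k} (-1)^{k+l} ((m-l)! (n-k+l)! / (l! (k-l)!))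
  e_{m-2l} ⊗ ẽ_{n-2(k-l)}`.
Here `e_{m-2l}` is the basis vector of `V_m` with index `m - l`, and `ẽ_{n-2(k-l)}`
is the basis vector of `V_n` with index `n - k + l`. -/
theorem X_pow_bvec (m n k : ℕ) (hkm : k ≤ m) (hkn : k ≤ n) :
    (Xt m n ^ (m + n - 2 * k)) (bvec m n k hkm hkn) =
      ((m + n - 2 * k).factorial : ℝ) •
        ∑ l : Fin (k + 1), ((-1 : ℝ)) ^ (k + (l : ℕ)) •
          (((((m - (l : ℕ)).factorial : ℝ) * ((n - k + (l : ℕ)).factorial : ℝ)) /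
              (((l : ℕ).factorial : ℝ) * ((k - (l : ℕ)).factorial : ℝ))) •
            (e m ⟨m - (l : ℕ), by omega⟩ ⊗ₜ[ℝ] e n ⟨n - k + (l : ℕ), by omega⟩)) := by
  
  set s := m + n - 2 * k with hsdef
  have hs : s + 2 * k = m + n := by omega
  rw [bvec_eq m n k hkm hkn, map_sum]
  have step1 : ∀ i ∈ Finset.range (k + 1),
      (Xt m n ^ s) ((-1 : ℝ) ^ i • (ee m i ⊗ₜ[ℝ] ee n (k - i)))
        = ∑ a ∈ Finset.range (s + 1), cc m n k s i a • tv m n (i + a) ((k - i) + (s - a)) := by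
    intro i hi
    rw [map_smul, Xt_pow_tmul, Finset.smul_sum]
    apply Finset.sum_congr rfl
    intro a ha
    rw [Xop_pow_ee, Xop_pow_ee]
    simp only [TensorProduct.smul_tmul', TensorProduct.tmul_smul,
      ← Nat.cast_smul_eq_nsmul ℝ, smul_smul, cc, tv]
    congr 1
    ring
  rw [Finset.sum_congr rfl step1]
  have step2 : ∀ i ∈ Finset.range (k + 1),
      (∑ a ∈ Finset.range (s + 1), cc m n k s i a • tv m n (i + a) ((k - i) + (s - a)))
        = ∑ l ∈ Finset.range (k + 1), dd m n k s i l • tv m n (m - l) (n - k + l) := by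
    intro i hi
    simp only [Finset.mem_range] at hi
    exact stepA m n k s i hkm hkn (by omega) hs
  rw [Finset.sum_congr rfl step2, Finset.sum_comm]
  have step3 : ∀ l ∈ Finset.range (k + 1),
      (∑ i ∈ Finset.range (k + 1), dd m n k s i l • tv m n (m - l) (n - k + l))
        = ((s.factorial : ℝ) * ((-1 : ℝ) ^ (k + l) *
            (((m - l).factorial : ℝ) * ((n - k + l).factorial : ℝ)
              / ((l.factorial : ℝ) * ((k - l).factorial : ℝ)))))
            • tv m n (m - l) (n - k + l) := by
    intro l hl
    simp only [Finset.mem_range] at hl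
    rw [← Finset.sum_smul, stepC m n k s l hkm hkn (by omega) hs]
  rw [Finset.sum_congr rfl step3, Finset.smul_sum,
    ← Fin.sum_univ_eq_sum_range
      (fun l => ((s.factorial : ℝ) * ((-1 : ℝ) ^ (k + l) *
            (((m - l).factorial : ℝ) * ((n - k + l).factorial : ℝ)
              / ((l.factorial : ℝ) * ((k - l).factorial : ℝ)))))
            • tv m n (m - l) (n - k + l)) (k + 1)]
  apply Finset.sum_congr rfl
  intro l _
  rw [tv, ee_of_le (show m - (l : ℕ) ≤ m by omega) (by omega),
    ee_of_le (show n - k + (l : ℕ) ≤ n by omega) (by omega), smul_smul, smul_smul]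
  congr 1
  ring
end

section
/- Let Q and R be nondegenerate symmetric bilinear forms on V_m and V_n respectively making each a *-representation. For 0 ≤ k ≤ min(m, n), set 𝔰_k = m + n − 2k, b_{−𝔰_k} = Σ_{i=0}^{k} (−1)^i · e_{−m+2i} ⊗ ẽ_{−n+2(k−i)}, and ω_k = (Q⊗R)( b_{−𝔰_k}, X^{𝔰_k} b_{−𝔰_k} ). Then ω_k ≠ 0 for all 0 ≤ k ≤ min(m, n), and ω_k · ω_{k+1} < 0 for all 0 ≤ k < min(m, n); that is, the values ω_k are nonzero with strictly alternating signs in k. -/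
open scoped TensorProduct

lemma Xop_e (m : ℕ) (i : Fin (m+1)) :
    Xop m (e m i) = if h : (i:ℕ) < m then
      (((m : ℝ) - (i : ℕ)) * ((i : ℕ) + 1)) • e m ⟨(i : ℕ) + 1, by omega⟩ else 0 :=
  (eb m).constr_basis ℝ _ i

lemma Yop_e (m : ℕ) (i : Fin (m+1)) :
    Yop m (e m i) = if h : 0 < (i:ℕ) then e m ⟨(i : ℕ) - 1, by omega⟩ else 0 :=
  (eb m).constr_basis ℝ _ i

lemma Hop_e (m : ℕ) (i : Fin (m+1)) :
    Hop m (e m i) = (-(m : ℝ) + 2 * (i : ℕ)) • e m i :=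
  (eb m).constr_basis ℝ _ i

/-- scaled basis vector `x^i y^{m-i}`, extended by zero out of range -/
noncomputable def uu (m i : ℕ) : V m :=
  if h : i ≤ m then ((Nat.factorial i : ℝ)) • e m ⟨i, by omega⟩ else 0

lemma Xop_uu (m i : ℕ) : Xop m (uu m i) = ((m - i : ℕ) : ℝ) • uu m (i + 1) := by
  unfold uu
  rcases lt_trichotomy i m with h | rfl | h
  · rw [dif_pos h.le, dif_pos (by omega)]
    rw [map_smul, Xop_e]
    rw [dif_pos (by simpa using h)]
    rw [smul_smul, smul_smul]
    congr 1
    push_cast [Nat.factorial_succ, Nat.cast_sub h.le]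
    ring
  · rw [dif_pos le_rfl, dif_neg (by omega), map_smul, Xop_e, dif_neg (by simp), smul_zero,
      Nat.sub_self, smul_zero]
  · rw [dif_neg (by omega), dif_neg (by omega), map_zero, smul_zero]
lemma Xt_tmul (m n : ℕ) (u : V m) (v : V n) :
    Xt m n (u ⊗ₜ[ℝ] v) = (Xop m u) ⊗ₜ[ℝ] v + u ⊗ₜ[ℝ] (Xop n v) := by
  simp [Xt]

/-- `(xy'-yx')^k x^p y^{m-k-p} ⊗ x'^q y'^{n-k-q}` -/
noncomputable def Gv (m n k p q : ℕ) : V m ⊗[ℝ] V n :=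
  ∑ j ∈ Finset.range (k+1),
    ((-1:ℝ)^j * (k.choose j)) • (uu m (k - j + p) ⊗ₜ[ℝ] uu n (j + q))

lemma cancelG (m n k p q : ℕ) :
    (∑ j ∈ Finset.range (k+1),
      (((-1:ℝ)^j * (k.choose j)) * (j:ℝ)) • (uu m (k-j+(p+1)) ⊗ₜ[ℝ] uu n (j+q)))
    + (∑ j ∈ Finset.range (k+1),
      (((-1:ℝ)^j * (k.choose j)) * ((k-j:ℕ):ℝ)) • (uu m (k-j+p) ⊗ₜ[ℝ] uu n (j+(q+1)))) = 0 := by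
  rw [Finset.sum_range_succ' _ k, Finset.sum_range_succ _ k]
  simp only [Nat.cast_zero, mul_zero, zero_smul, add_zero, Nat.sub_self, smul_zero]
  rw [← Finset.sum_add_distrib]
  apply Finset.sum_eq_zero
  intro j hj
  rw [Finset.mem_range] at hj
  have h1 : k - (j+1) + (p+1) = k - j + p := by omega
  have h2 : (j+1) + q = j + (q+1) := by omega
  have h3' : (k.choose (j+1)) * (j+1) = (k.choose j) * (k-j) := Nat.choose_succ_right_eq k j
  have h3c : ((k.choose (j+1)) * (j+1) : ℝ) = ((k.choose j) : ℝ) * ((k-j : ℕ) : ℝ) := by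
    exact_mod_cast congrArg (fun x : ℕ => (x:ℝ)) h3'
  have h3 : ((-1:ℝ)^(j+1) * (k.choose (j+1))) * ((j+1:ℕ):ℝ)
      = -(((-1:ℝ)^j * (k.choose j)) * ((k-j:ℕ):ℝ)) := by
    rw [pow_succ]
    push_cast
    push_cast at h3c
    linear_combination (-(-1:ℝ)^j) * h3c
  rw [h1, h2, h3]
  module

lemma Xt_Gv (m n k p q : ℕ) (hkm : k + p ≤ m) (hkn : k + q ≤ n) :
    Xt m n (Gv m n k p q) =
      ((m - k - p : ℕ) : ℝ) • Gv m n k (p+1) q + ((n - k - q : ℕ) : ℝ) • Gv m n k p (q+1) := by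
  unfold Gv
  rw [map_sum]
  have step : ∀ j ∈ Finset.range (k+1),
      Xt m n (((-1:ℝ)^j * (k.choose j)) • (uu m (k - j + p) ⊗ₜ[ℝ] uu n (j + q))) =
      ((((m-k-p:ℕ):ℝ) * ((-1:ℝ)^j * (k.choose j))) • (uu m (k-j+(p+1)) ⊗ₜ[ℝ] uu n (j+q))
        + (((n-k-q:ℕ):ℝ) * ((-1:ℝ)^j * (k.choose j))) • (uu m (k-j+p) ⊗ₜ[ℝ] uu n (j+(q+1))))
      + ((((-1:ℝ)^j * (k.choose j)) * (j:ℝ)) • (uu m (k-j+(p+1)) ⊗ₜ[ℝ] uu n (j+q))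
        + (((-1:ℝ)^j * (k.choose j)) * ((k-j:ℕ):ℝ)) • (uu m (k-j+p) ⊗ₜ[ℝ] uu n (j+(q+1)))) := by
    intro j hj
    rw [Finset.mem_range] at hj
    rw [map_smul, Xt_tmul, Xop_uu, Xop_uu]
    have e1 : (m - (k - j + p) : ℕ) = (m - k - p) + j := by omega
    have e2 : (n - (j + q) : ℕ) = (n - k - q) + (k - j) := by omega
    have e3 : (k - j + p) + 1 = k - j + (p+1) := by omega
    have e4 : (j + q) + 1 = j + (q + 1) := by omega
    rw [e1, e2, e3, e4]
    rw [TensorProduct.tmul_smul, ← TensorProduct.smul_tmul']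
    push_cast
    module
  rw [Finset.sum_congr rfl step]
  simp only [Finset.sum_add_distrib]
  rw [cancelG, add_zero]
  rw [Finset.smul_sum, Finset.smul_sum]
  congr 1 <;> · apply Finset.sum_congr rfl; intro j hj; rw [smul_smul]
lemma Xt_pow_Gv (m n k : ℕ) (hkm : k ≤ m) (hkn : k ≤ n) (t : ℕ) :
    (Xt m n ^ t) (Gv m n k 0 0) = ∑ a ∈ Finset.range (t+1),
      (((t.choose a) : ℝ) * ((m-k).descFactorial a : ℕ) * ((n-k).descFactorial (t-a) : ℕ))
        • Gv m n k a (t - a) := by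
  induction t with
  | zero => simp
  | succ t ih =>
    rw [pow_succ', Module.End.mul_apply, ih, map_sum]
    have step : ∀ a ∈ Finset.range (t+1),
        Xt m n (((((t.choose a) : ℝ)) * ((m-k).descFactorial a : ℕ) * ((n-k).descFactorial (t-a) : ℕ))
          • Gv m n k a (t - a)) =
        (((t.choose a : ℝ)) * ((m-k).descFactorial (a+1) : ℕ) * ((n-k).descFactorial (t-a) : ℕ))
          • Gv m n k (a+1) (t-a)
        + (((t.choose a : ℝ)) * ((m-k).descFactorial a : ℕ) * ((n-k).descFactorial (t-a+1) : ℕ))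
          • Gv m n k a (t-a+1) := by
      intro a ha
      by_cases h1 : k + a ≤ m
      · by_cases h2 : k + (t-a) ≤ n
        · rw [map_smul, Xt_Gv m n k a (t-a) h1 h2, smul_add, smul_smul, smul_smul]
          congr 1
          · congr 1
            rw [Nat.descFactorial_succ]
            push_cast
            ring
          · congr 1
            rw [Nat.descFactorial_succ]
            push_cast
            ring
        · have z1 : (n-k).descFactorial (t-a) = 0 :=
            Nat.descFactorial_eq_zero_iff_lt.mpr (by omega)
          have z2 : (n-k).descFactorial (t-a+1) = 0 :=
            Nat.descFactorial_eq_zero_iff_lt.mpr (by omega)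
          rw [z1, z2]
          simp only [Nat.cast_zero, mul_zero, zero_smul, LinearMap.map_zero, zero_add]
      · have z1 : (m-k).descFactorial a = 0 :=
          Nat.descFactorial_eq_zero_iff_lt.mpr (by omega)
        have z2 : (m-k).descFactorial (a+1) = 0 :=
          Nat.descFactorial_eq_zero_iff_lt.mpr (by omega)
        rw [z1, z2]
        simp only [Nat.cast_zero, mul_zero, zero_mul, zero_smul, LinearMap.map_zero, zero_add, add_zero]
    rw [Finset.sum_congr rfl step, Finset.sum_add_distrib]
    have target_eq : (∑ a ∈ Finset.range (t+1+1),
        ((((t+1).choose a) : ℝ) * ((m-k).descFactorial a : ℕ) * ((n-k).descFactorial (t+1-a) : ℕ))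
          • Gv m n k a (t+1-a)) =
        (∑ a ∈ Finset.range (t+1),
          (((t.choose a : ℝ)) * ((m-k).descFactorial (a+1) : ℕ) * ((n-k).descFactorial (t-a) : ℕ))
            • Gv m n k (a+1) (t-a))
        + (∑ a ∈ Finset.range (t+1),
          (((t.choose a : ℝ)) * ((m-k).descFactorial a : ℕ) * ((n-k).descFactorial (t-a+1) : ℕ))
            • Gv m n k a (t-a+1)) := by
      rw [Finset.sum_range_succ' _ (t+1)]
      have reidx : ∀ b ∈ Finset.range (t+1),
          ((((t+1).choose (b+1)) : ℝ) * ((m-k).descFactorial (b+1) : ℕ)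
            * ((n-k).descFactorial (t+1-(b+1)) : ℕ)) • Gv m n k (b+1) (t+1-(b+1)) =
          (((t.choose b : ℝ)) * ((m-k).descFactorial (b+1) : ℕ) * ((n-k).descFactorial (t-b) : ℕ))
            • Gv m n k (b+1) (t-b)
          + (((t.choose (b+1) : ℝ)) * ((m-k).descFactorial (b+1) : ℕ) * ((n-k).descFactorial (t-b) : ℕ))
            • Gv m n k (b+1) (t-b) := by
        intro b hb
        have e1 : t + 1 - (b+1) = t - b := by omega
        rw [e1, Nat.choose_succ_succ, ← add_smul]
        congr 1
        push_cast
        ring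
      rw [Finset.sum_congr rfl reidx, Finset.sum_add_distrib]
      have last0 : ∀ b ∈ Finset.range (t+1),
          (((t.choose (b+1) : ℝ)) * ((m-k).descFactorial (b+1) : ℕ) * ((n-k).descFactorial (t-b) : ℕ))
            • Gv m n k (b+1) (t-b) =
          (fun b => (((t.choose (b+1) : ℝ)) * ((m-k).descFactorial (b+1) : ℕ)
            * ((n-k).descFactorial (t-b) : ℕ)) • Gv m n k (b+1) (t-b)) b := fun _ _ => rfl
      rw [add_assoc]
      congr 1
      rw [Finset.sum_range_succ _ t, Finset.sum_range_succ' _ t]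
      simp only [Nat.choose_succ_self, Nat.cast_zero, zero_mul, zero_smul, add_zero,
        Nat.choose_zero_right, Nat.cast_one, one_mul, Nat.sub_zero]
      congr 1
      apply Finset.sum_congr rfl
      intro b hb
      rw [Finset.mem_range] at hb
      have e : t - (b+1) + 1 = t - b := by omega
      rw [e]
    rw [target_eq]
lemma Xt_pow_top (m n k : ℕ) (hkm : k ≤ m) (hkn : k ≤ n) :
    (Xt m n ^ ((m-k)+(n-k))) (Gv m n k 0 0) =
      (((((m-k)+(n-k)).choose (m-k) : ℕ) : ℝ) * ((m-k).factorial : ℕ) * ((n-k).factorial : ℕ))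
        • Gv m n k (m-k) (n-k) := by
  rw [Xt_pow_Gv m n k hkm hkn]
  rw [Finset.sum_eq_single (m-k)]
  · rw [Nat.descFactorial_self, Nat.add_sub_cancel_left, Nat.descFactorial_self]
  · intro b hb hne
    rcases Nat.lt_or_ge b (m-k) with h | h
    · have : (n-k).descFactorial ((m-k)+(n-k) - b) = 0 :=
        Nat.descFactorial_eq_zero_iff_lt.mpr (by omega)
      rw [this]
      simp
    · have : (m-k).descFactorial b = 0 :=
        Nat.descFactorial_eq_zero_iff_lt.mpr (by omega)
      rw [this]
      simp
  · intro h
    exact absurd (Finset.mem_range.mpr (by omega)) h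

lemma Gv_eq_bvec (m n k : ℕ) (hkm : k ≤ m) (hkn : k ≤ n) :
    Gv m n k 0 0 = ((-1:ℝ)^k * (k.factorial : ℕ)) • bvec m n k hkm hkn := by
  unfold Gv bvec
  rw [← Finset.sum_range_reflect]
  rw [Finset.smul_sum, ← Fin.sum_univ_eq_sum_range (fun j => _) (k+1)]
  apply Finset.sum_congr rfl
  intro i _
  have hik : (i : ℕ) ≤ k := by omega
  have e1 : k + 1 - 1 - (i:ℕ) = k - (i:ℕ) := by omega
  have e2 : k - (k - (i:ℕ)) + 0 = (i:ℕ) := by omega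
  have e3 : (k - (i:ℕ)) + 0 = k - (i:ℕ) := by omega
  rw [e1, e2, e3]
  rw [show uu m (i:ℕ) = (((i:ℕ).factorial : ℕ) : ℝ) • e m ⟨(i:ℕ), by omega⟩ from dif_pos (by omega),
    show uu n (k - (i:ℕ)) = (((k - (i:ℕ)).factorial : ℕ) : ℝ) • e n ⟨k - (i:ℕ), by omega⟩ from
      dif_pos (by omega)]
  rw [TensorProduct.smul_tmul_smul, smul_smul, smul_smul]
  congr 1
  have hch : ((k.choose (k - (i:ℕ))) * ((i:ℕ).factorial) * ((k - (i:ℕ)).factorial) : ℕ)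
      = k.factorial := by
    rw [Nat.choose_symm hik]
    exact Nat.choose_mul_factorial_mul_factorial hik
  have hchR : ((k.choose (k - (i:ℕ))) : ℝ) * (((i:ℕ).factorial : ℕ) : ℝ)
      * (((k - (i:ℕ)).factorial : ℕ) : ℝ) = ((k.factorial : ℕ) : ℝ) := by
    exact_mod_cast congrArg (fun x : ℕ => (x:ℝ)) hch
  have hsq : ((-1:ℝ))^(i:ℕ) * ((-1:ℝ))^(i:ℕ) = 1 := by
    rw [← pow_add, show (i:ℕ) + (i:ℕ) = 2 * (i:ℕ) from by ring, pow_mul]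
    norm_num
  have hsgn : ((-1:ℝ))^(k - (i:ℕ)) * ((-1:ℝ))^(i:ℕ) = ((-1:ℝ))^k := by
    rw [← pow_add]
    congr 1
    omega
  have hsgn2 : ((-1:ℝ))^(k - (i:ℕ)) = (-1:ℝ)^k * (-1:ℝ)^(i:ℕ) := by
    calc ((-1:ℝ))^(k - (i:ℕ)) = ((-1:ℝ))^(k - (i:ℕ)) * (((-1:ℝ))^(i:ℕ) * ((-1:ℝ))^(i:ℕ)) := by
          rw [hsq, mul_one]
      _ = (((-1:ℝ))^(k - (i:ℕ)) * ((-1:ℝ))^(i:ℕ)) * ((-1:ℝ))^(i:ℕ) := by ring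
      _ = (-1:ℝ)^k * (-1:ℝ)^(i:ℕ) := by rw [hsgn]
  rw [hsgn2]
  linear_combination ((-1:ℝ)^k * (-1:ℝ)^(i:ℕ)) * hchR
lemma Q_struct (m : ℕ) (Q : LinearMap.BilinForm ℝ (V m))
    (hQY : ∀ u v : V m, Q (Yop m u) v = Q u (Yop m v))
    (hQH : ∀ u v : V m, Q (Hop m u) v = - Q u (Hop m v)) (i j : Fin (m+1)) :
    Q (e m i) (e m j) =
      if (i:ℕ) + (j:ℕ) = m then Q (e m ⟨0, by omega⟩) (e m ⟨m, by omega⟩) else 0 := by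
  by_cases h : (i:ℕ) + (j:ℕ) = m
  · rw [if_pos h]
    -- induct downward on i
    have key : ∀ d : ℕ, ∀ i j : Fin (m+1), (i:ℕ) = d → (i:ℕ) + (j:ℕ) = m →
        Q (e m i) (e m j) = Q (e m ⟨0, by omega⟩) (e m ⟨m, by omega⟩) := by
      intro d
      induction d with
      | zero =>
        intro i j hi hij
        have hi' : i = ⟨0, by omega⟩ := Fin.ext (by show (i:ℕ) = 0; omega)
        have hj' : j = ⟨m, by omega⟩ := Fin.ext (by show (j:ℕ) = m; omega)
        exact congrArg₂ (fun a b => Q (e m a) (e m b)) hi' hj'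
      | succ d ih =>
        intro i j hi hij
        have hjm : (j:ℕ) + 1 ≤ m := by omega
        have h1 : Yop m (e m ⟨(j:ℕ)+1, by omega⟩) = e m j := by
          rw [Yop_e, dif_pos (by simp)]
          exact congrArg (e m) (Fin.ext (by simp))
        have h2 : Yop m (e m i) = e m ⟨d, by omega⟩ := by
          rw [Yop_e, dif_pos (by simp [hi])]
          exact congrArg (e m) (Fin.ext (by simp [hi]))
        calc Q (e m i) (e m j) = Q (e m i) (Yop m (e m ⟨(j:ℕ)+1, by omega⟩)) := by rw [h1]
          _ = Q (Yop m (e m i)) (e m ⟨(j:ℕ)+1, by omega⟩) := (hQY _ _).symm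
          _ = Q (e m ⟨d, by omega⟩) (e m ⟨(j:ℕ)+1, by omega⟩) := by rw [h2]
          _ = Q (e m ⟨0, by omega⟩) (e m ⟨m, by omega⟩) := ih _ _ rfl (by
              show d + ((j:ℕ)+1) = m; omega)
    exact key (i:ℕ) i j rfl h
  · rw [if_neg h]
    have := hQH (e m i) (e m j)
    rw [Hop_e, Hop_e, map_smul, LinearMap.smul_apply, map_smul, smul_eq_mul, smul_eq_mul] at this
    have hne : ((i:ℕ):ℝ) + ((j:ℕ):ℝ) ≠ (m:ℝ) := by
      intro hc
      exact h (by exact_mod_cast hc)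
    have hco : ((-(m:ℝ) + 2 * (i:ℕ)) + (-(m:ℝ) + 2 * (j:ℕ))) * Q (e m i) (e m j) = 0 := by
      linarith [this]
    rcases mul_eq_zero.mp hco with hc | hc
    · exfalso; apply hne; linarith
    · exact hc

lemma e_ne_zero (m : ℕ) (i : Fin (m+1)) : e m i ≠ 0 := by
  intro h
  have : (e m i) i = 0 := by rw [h]; rfl
  rw [e, eb, Pi.basisFun_apply] at this
  simp at this

lemma q_ne_zero (m : ℕ) (Q : LinearMap.BilinForm ℝ (V m))
    (hQnd : ∀ u : V m, (∀ v : V m, Q u v = 0) → u = 0)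
    (hQY : ∀ u v : V m, Q (Yop m u) v = Q u (Yop m v))
    (hQH : ∀ u v : V m, Q (Hop m u) v = - Q u (Hop m v)) :
    Q (e m ⟨0, by omega⟩) (e m ⟨m, by omega⟩) ≠ 0 := by
  intro h0
  apply e_ne_zero m ⟨0, by omega⟩
  apply hQnd
  intro v
  have hz : Q (e m ⟨0, by omega⟩) = 0 := by
    apply (eb m).ext
    intro j
    show Q (e m ⟨0, by omega⟩) (e m j) = 0
    rw [Q_struct m Q hQY hQH]
    split
    · exact h0
    · rfl
  rw [hz]
  rfl

lemma Q_uu (m : ℕ) (Q : LinearMap.BilinForm ℝ (V m))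
    (hQY : ∀ u v : V m, Q (Yop m u) v = Q u (Yop m v))
    (hQH : ∀ u v : V m, Q (Hop m u) v = - Q u (Hop m v)) (i j : ℕ) :
    Q (uu m i) (uu m j) =
      if i + j = m then ((i.factorial : ℕ) : ℝ) * ((j.factorial : ℕ) : ℝ)
        * Q (e m ⟨0, by omega⟩) (e m ⟨m, by omega⟩) else 0 := by
  unfold uu
  by_cases hi : i ≤ m
  · by_cases hj : j ≤ m
    · rw [dif_pos hi, dif_pos hj, map_smul, map_smul, LinearMap.smul_apply, smul_eq_mul,
        smul_eq_mul, Q_struct m Q hQY hQH]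
      split
      · ring
      · ring
    · rw [dif_neg hj, if_neg (by omega)]
      simp
  · rw [dif_neg hi, if_neg (by omega)]
    simp
lemma neg_one_pow_sub (k j : ℕ) (h : j ≤ k) : ((-1:ℝ))^(k-j) = (-1:ℝ)^k * (-1:ℝ)^j := by
  have h1 : ((-1:ℝ))^(k-j) * ((-1:ℝ))^j = (-1:ℝ)^k := by
    rw [← pow_add]
    congr 1
    omega
  have h2 : ((-1:ℝ))^j * ((-1:ℝ))^j = 1 := by
    rw [← pow_add, show j + j = 2*j from by ring, pow_mul]
    norm_num
  calc ((-1:ℝ))^(k-j) = ((-1:ℝ))^(k-j) * (((-1:ℝ))^j * ((-1:ℝ))^j) := by rw [h2, mul_one]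
    _ = (((-1:ℝ))^(k-j) * ((-1:ℝ))^j) * ((-1:ℝ))^j := by ring
    _ = (-1:ℝ)^k * (-1:ℝ)^j := by rw [h1]

lemma pair_Gv (m n k : ℕ) (hkm : k ≤ m) (hkn : k ≤ n)
    (Q : LinearMap.BilinForm ℝ (V m)) (R : LinearMap.BilinForm ℝ (V n))
    (hQY : ∀ u v : V m, Q (Yop m u) v = Q u (Yop m v))
    (hQH : ∀ u v : V m, Q (Hop m u) v = - Q u (Hop m v))
    (hRY : ∀ u v : V n, R (Yop n u) v = R u (Yop n v))
    (hRH : ∀ u v : V n, R (Hop n u) v = - R u (Hop n v)) :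
    (LinearMap.BilinForm.tmul Q R) (Gv m n k 0 0) (Gv m n k (m-k) (n-k)) =
      (-1:ℝ)^k * (Q (e m ⟨0, by omega⟩) (e m ⟨m, by omega⟩))
        * (R (e n ⟨0, by omega⟩) (e n ⟨n, by omega⟩)) *
      ∑ j ∈ Finset.range (k+1), ((k.choose j : ℝ) * (k.choose j : ℝ)
        * (((k-j+0).factorial : ℕ) : ℝ) * (((j+(n-k)).factorial : ℕ) : ℝ)
        * (((k-(k-j)+0).factorial : ℕ) : ℝ) * (((k-j+(m-k)).factorial : ℕ) : ℝ)) := by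
  unfold Gv
  simp only [map_sum, LinearMap.sum_apply, map_smul, LinearMap.smul_apply, smul_eq_mul,
    LinearMap.BilinForm.tensorDistrib_tmul]
  simp only [Q_uu m Q hQY hQH, Q_uu n R hRY hRH]
  have inner : ∀ j ∈ Finset.range (k+1),
      ((-1:ℝ)^j * (k.choose j : ℝ)) * (∑ j' ∈ Finset.range (k+1), ((-1:ℝ)^j' * (k.choose j' : ℝ)) *
        ((if (j' + 0) + (j + (n-k)) = n then (((j'+0).factorial : ℕ) : ℝ)
            * (((j+(n-k)).factorial : ℕ) : ℝ) * (R (e n ⟨0, by omega⟩) (e n ⟨n, by omega⟩)) else 0)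
         * (if (k - j' + 0) + (k - j + (m-k)) = m then (((k-j'+0).factorial : ℕ) : ℝ)
            * (((k-j+(m-k)).factorial : ℕ) : ℝ)
            * (Q (e m ⟨0, by omega⟩) (e m ⟨m, by omega⟩)) else 0))) =
      (-1:ℝ)^k * (Q (e m ⟨0, by omega⟩) (e m ⟨m, by omega⟩))
        * (R (e n ⟨0, by omega⟩) (e n ⟨n, by omega⟩))
        * ((k.choose j : ℝ) * (k.choose j : ℝ)
        * (((k-j+0).factorial : ℕ) : ℝ) * (((j+(n-k)).factorial : ℕ) : ℝ)
        * (((k-(k-j)+0).factorial : ℕ) : ℝ) * (((k-j+(m-k)).factorial : ℕ) : ℝ)) := by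
    intro j hj
    rw [Finset.mem_range] at hj
    rw [Finset.sum_eq_single (k-j)]
    · rw [if_pos (by omega), if_pos (by omega), neg_one_pow_sub k j (by omega),
        Nat.choose_symm (by omega : j ≤ k)]
      ring_nf
      rw [show ((-1:ℝ))^(j*2) = 1 from by rw [mul_comm, pow_mul]; norm_num, mul_one]
    · intro j' hj' hne
      rw [Finset.mem_range] at hj'
      rw [if_neg (by omega)]
      ring
    · intro hmem
      exact absurd (Finset.mem_range.mpr (by omega)) hmem
  rw [Finset.sum_congr rfl inner, ← Finset.mul_sum]

/-- The answer to Fieseler's question: for nondegenerate symmetric bilinear forms `Q`, `R`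
making `V_m`, `V_n` into `*`-representations, the values
`ω_k = (Q ⊗ R)(b_{-𝔰_k}, X^{𝔰_k} b_{-𝔰_k})` (where `𝔰_k = m + n - 2k`) are all nonzero
and have strictly alternating signs for `0 ≤ k ≤ min m n`. -/
theorem omega_alternating (m n : ℕ)
    (Q : LinearMap.BilinForm ℝ (V m)) (R : LinearMap.BilinForm ℝ (V n))
    (hQsym : ∀ u v : V m, Q u v = Q v u)
    (hQnd : ∀ u : V m, (∀ v : V m, Q u v = 0) → u = 0)
    (hQX : ∀ u v : V m, Q (Xop m u) v = Q u (Xop m v))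
    (hQY : ∀ u v : V m, Q (Yop m u) v = Q u (Yop m v))
    (hQH : ∀ u v : V m, Q (Hop m u) v = - Q u (Hop m v))
    (hRsym : ∀ u v : V n, R u v = R v u)
    (hRnd : ∀ u : V n, (∀ v : V n, R u v = 0) → u = 0)
    (hRX : ∀ u v : V n, R (Xop n u) v = R u (Xop n v))
    (hRY : ∀ u v : V n, R (Yop n u) v = R u (Yop n v))
    (hRH : ∀ u v : V n, R (Hop n u) v = - R u (Hop n v))
    (ω : ℕ → ℝ)
    (hω : ∀ k (hkm : k ≤ m) (hkn : k ≤ n),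
      ω k = LinearMap.BilinForm.tmul Q R (bvec m n k hkm hkn)
        ((Xt m n ^ (m + n - 2 * k)) (bvec m n k hkm hkn))) :
    (∀ k ≤ min m n, ω k ≠ 0) ∧ (∀ k < min m n, ω k * ω (k + 1) < 0) := by
  have hqQ : Q (e m ⟨0, by omega⟩) (e m ⟨m, by omega⟩) ≠ 0 := q_ne_zero m Q hQnd hQY hQH
  have hqR : R (e n ⟨0, by omega⟩) (e n ⟨n, by omega⟩) ≠ 0 := q_ne_zero n R hRnd hRY hRH
  have key : ∀ k, k ≤ m → k ≤ n → ∃ c : ℝ, 0 < c ∧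
      ω k = (-1:ℝ)^k * ((Q (e m ⟨0, by omega⟩) (e m ⟨m, by omega⟩))
        * (R (e n ⟨0, by omega⟩) (e n ⟨n, by omega⟩))) * c := by
    intro k hkm hkn
    set qQ := Q (e m ⟨0, by omega⟩) (e m ⟨m, by omega⟩) with hqQdef
    set qR := R (e n ⟨0, by omega⟩) (e n ⟨n, by omega⟩) with hqRdef
    set S : ℝ := ∑ j ∈ Finset.range (k+1), ((k.choose j : ℝ) * (k.choose j : ℝ)
        * (((k-j+0).factorial : ℕ) : ℝ) * (((j+(n-k)).factorial : ℕ) : ℝ)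
        * (((k-(k-j)+0).factorial : ℕ) : ℝ) * (((k-j+(m-k)).factorial : ℕ) : ℝ)) with hSdef
    set D : ℝ := ((((m-k)+(n-k)).choose (m-k) : ℕ) : ℝ) * (((m-k).factorial : ℕ) : ℝ)
        * (((n-k).factorial : ℕ) : ℝ) with hDdef
    have hS : 0 < S := by
      rw [hSdef]
      apply Finset.sum_pos
      · intro j hj
        rw [Finset.mem_range] at hj
        have hc : 0 < (k.choose j : ℝ) := by
          exact_mod_cast Nat.choose_pos (show j ≤ k by omega)
        have f1 : (0:ℝ) < (((k-j+0).factorial : ℕ) : ℝ) := by exact_mod_cast Nat.factorial_pos _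
        have f2 : (0:ℝ) < (((j+(n-k)).factorial : ℕ) : ℝ) := by exact_mod_cast Nat.factorial_pos _
        have f3 : (0:ℝ) < (((k-(k-j)+0).factorial : ℕ) : ℝ) := by
          exact_mod_cast Nat.factorial_pos _
        have f4 : (0:ℝ) < (((k-j+(m-k)).factorial : ℕ) : ℝ) := by
          exact_mod_cast Nat.factorial_pos _
        positivity
      · exact ⟨0, Finset.mem_range.mpr (by omega)⟩
    have hD : 0 < D := by
      rw [hDdef]
      have hc : 0 < ((((m-k)+(n-k)).choose (m-k) : ℕ) : ℝ) := by
        exact_mod_cast Nat.choose_pos (Nat.le_add_right _ _)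
      have f1 : (0:ℝ) < (((m-k).factorial : ℕ) : ℝ) := by exact_mod_cast Nat.factorial_pos _
      have f2 : (0:ℝ) < (((n-k).factorial : ℕ) : ℝ) := by exact_mod_cast Nat.factorial_pos _
      positivity
    have hsq : ((-1:ℝ))^k * ((-1:ℝ))^k = 1 := by
      rw [← pow_add, show k + k = 2*k from by ring, pow_mul]
      norm_num
    have h2 : (LinearMap.BilinForm.tmul Q R) (Gv m n k 0 0)
        ((Xt m n ^ ((m-k)+(n-k))) (Gv m n k 0 0)) =
        (((-1:ℝ)^k * ((k.factorial : ℕ) : ℝ)) * ((-1:ℝ)^k * ((k.factorial : ℕ) : ℝ))) * ω k := by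
      conv_lhs => rw [Gv_eq_bvec m n k hkm hkn]
      rw [map_smul, map_smul, LinearMap.smul_apply, map_smul, smul_eq_mul, smul_eq_mul]
      rw [show (m-k)+(n-k) = m + n - 2*k from by omega, ← hω k hkm hkn]
      ring
    have h1 : (LinearMap.BilinForm.tmul Q R) (Gv m n k 0 0)
        ((Xt m n ^ ((m-k)+(n-k))) (Gv m n k 0 0)) = D * ((-1:ℝ)^k * qQ * qR * S) := by
      rw [Xt_pow_top m n k hkm hkn, map_smul, smul_eq_mul,
        pair_Gv m n k hkm hkn Q R hQY hQH hRY hRH]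
    rw [h2] at h1
    have hmain : (((k.factorial : ℕ) : ℝ))^2 * ω k = (-1:ℝ)^k * (qQ * qR) * (D * S) := by
      linear_combination h1 + (-(((k.factorial : ℕ) : ℝ))^2 * ω k) * hsq
    refine ⟨D * S / (((k.factorial : ℕ) : ℝ))^2, div_pos (mul_pos hD hS) (by positivity), ?_⟩
    have hstep : ω k = (-1:ℝ)^k * (qQ * qR) * (D * S) / (((k.factorial : ℕ) : ℝ))^2 := by
      rw [eq_div_iff (by positivity : (((k.factorial : ℕ) : ℝ))^2 ≠ 0)]
      linear_combination hmain
    rw [hstep, mul_div_assoc]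
  constructor
  · intro k hk
    obtain ⟨c, hc, he⟩ := key k (le_trans hk (min_le_left _ _)) (le_trans hk (min_le_right _ _))
    rw [he]
    exact mul_ne_zero (mul_ne_zero (pow_ne_zero _ (by norm_num))
      (mul_ne_zero hqQ hqR)) (ne_of_gt hc)
  · intro k hk
    obtain ⟨c, hc, he⟩ := key k (by omega) (by omega)
    obtain ⟨c', hc', he'⟩ := key (k+1) (by omega) (by omega)
    have hsq : ((-1:ℝ))^k * ((-1:ℝ))^k = 1 := by
      rw [← pow_add, show k + k = 2*k from by ring, pow_mul]
      norm_num
    have hprod : ω k * ω (k+1) =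
        -(((Q (e m ⟨0, by omega⟩) (e m ⟨m, by omega⟩))
          * (R (e n ⟨0, by omega⟩) (e n ⟨n, by omega⟩)))^2 * (c * c')) := by
      rw [he, he', pow_succ]
      linear_combination (-((Q (e m ⟨0, by omega⟩) (e m ⟨m, by omega⟩))
          * (R (e n ⟨0, by omega⟩) (e n ⟨n, by omega⟩)))^2 * (c * c')) * hsq
    rw [hprod, neg_lt_zero]
    have hne : (Q (e m ⟨0, by omega⟩) (e m ⟨m, by omega⟩))
        * (R (e n ⟨0, by omega⟩) (e n ⟨n, by omega⟩)) ≠ 0 := mul_ne_zero hqQ hqR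
    exact mul_pos ((sq_nonneg _).lt_of_ne (Ne.symm (pow_ne_zero 2 hne))) (mul_pos hc hc')
end
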